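/- arXiv:1806.08411 — 6 statements merged into one kernel-verified Lean document; each statement's English description precedes it below -/
import Mathlib

section
/- The series ∑_{n≥0} (-1)^n (4n+1) / (4(n+1)(1-2n)) · (C(2n,n)/4^n)^3 equals 1/π. -/
/-!
Write `a N = C(2N,N)/4^N` and `t n` for the summands. The weights
`w N n = ∏_{j<n} (N - j)/(N + j + 3/2)` lie in `[-1, 1]`, vanish for `n > N` and tend to `1` as
`N → ∞`, so by Tannery's theorem the terminating sums `U N = ∑_{n ≤ N} t n * w N n` tend to `∑ t n`.
In the Wilf–Zeilberger manner, for a rational function `ρ` of `N`,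
`t n * w (N+1) n - ρ N * t n * w N n` telescopes in `n` against an
explicit certificate, whence `U (N+1) = ρ N * U N` and `U N = (2N+1)^2/(4(N+1)) * a N ^ 2`. Wallis'
product says `(2N+1) * a N ^ 2 → 2/π`, so `U N → 1/π`.
-/

open Filter Finset Topology

namespace CentralBinomCubeSeries

theorem tendsto_sum_range_mul_of_tendsto_one {f : ℕ → ℝ} (hf : Summable fun k => ‖f k‖)
    {w : ℕ → ℕ → ℝ} (hw : ∀ N k, |w N k| ≤ 1) (hlim : ∀ k, Tendsto (fun N => w N k) atTop (𝓝 1)) :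
    Tendsto (fun N => ∑ k ∈ range (N + 1), f k * w N k) atTop (𝓝 (∑' k, f k)) := by
  have h := tendsto_tsum_of_dominated_convergence (𝓕 := atTop)
    (f := fun N k => if k ≤ N then f k * w N k else 0) hf
    (fun k => by
      simpa using ((hlim k).const_mul (f k)).congr'
        ((eventually_ge_atTop k).mono fun N hN => (if_pos hN).symm))
    (Eventually.of_forall fun N k => by
      split_ifs
      · simpa [norm_mul] using mul_le_mul_of_nonneg_left (hw N k) (abs_nonneg (f k))
      · simp)
  refine h.congr fun N => ?_
  rw [tsum_eq_sum (s := range (N + 1)) fun k hk => if_neg (by simpa [Nat.lt_succ_iff] using hk)]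
  exact sum_congr rfl fun k hk => if_pos (Nat.lt_succ_iff.mp (mem_range.mp hk))

noncomputable def centralBinomRatio (n : ℕ) : ℝ := (n.centralBinom : ℝ) / 4 ^ n

lemma centralBinomRatio_pos (n : ℕ) : 0 < centralBinomRatio n := by
  unfold centralBinomRatio
  have := n.centralBinom_pos
  positivity

@[simp]
lemma centralBinomRatio_zero : centralBinomRatio 0 = 1 := by simp [centralBinomRatio]

lemma centralBinomRatio_succ (n : ℕ) :
    centralBinomRatio (n + 1) = centralBinomRatio n * ((2 * n + 1) / (2 * n + 2)) := by
  have h : ((n : ℝ) + 1) * (n + 1).centralBinom = 2 * (2 * n + 1) * n.centralBinom := by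
    exact_mod_cast n.succ_mul_centralBinom_succ
  unfold centralBinomRatio
  field_simp
  rw [pow_succ]
  linear_combination 2 * 4 ^ n * h

lemma centralBinomRatio_sq_mul_le (n : ℕ) : centralBinomRatio n ^ 2 * (n + 1) ≤ 1 := by
  induction n with
  | zero => simp
  | succ n ih =>
    have key : centralBinomRatio (n + 1) ^ 2 * ((n + 1 : ℕ) + 1)
        = centralBinomRatio n ^ 2 * ((2 * n + 1) ^ 2 * (n + 2) / (4 * (n + 1) ^ 2)) := by
      rw [centralBinomRatio_succ]
      push_cast
      field_simp
      ring
    have hfac : (2 * (n : ℝ) + 1) ^ 2 * (n + 2) / (4 * (n + 1) ^ 2) ≤ n + 1 := by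
      rw [div_le_iff₀ (by positivity)]; nlinarith [(n.cast_nonneg : (0 : ℝ) ≤ n)]
    calc _ = _ := key
      _ ≤ centralBinomRatio n ^ 2 * (n + 1) := by gcongr
      _ ≤ 1 := ih

lemma centralBinomRatio_le_one (n : ℕ) : centralBinomRatio n ≤ 1 := by
  have h := centralBinomRatio_sq_mul_le n
  have := centralBinomRatio_pos n
  nlinarith [(n.cast_nonneg : (0 : ℝ) ≤ n)]

lemma centralBinomRatio_pow_three_le (n : ℕ) : centralBinomRatio n ^ 3 ≤ 1 / (n + 1) := by
  rw [le_div_iff₀ (by positivity)]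
  have := centralBinomRatio_pos n
  calc centralBinomRatio n ^ 3 * (n + 1)
        = centralBinomRatio n * (centralBinomRatio n ^ 2 * (n + 1)) := by ring
    _ ≤ 1 * 1 := by gcongr; exacts [centralBinomRatio_le_one n, centralBinomRatio_sq_mul_le n]
    _ = 1 := one_mul 1

lemma wallis_mul_centralBinomRatio_sq (N : ℕ) :
    Real.Wallis.W N * ((2 * N + 1) * centralBinomRatio N ^ 2) = 1 := by
  induction N with
  | zero => simp [Real.Wallis.W]
  | succ N ih =>
    calc _ = Real.Wallis.W N * ((2 * N + 1) * centralBinomRatio N ^ 2) := by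
          rw [Real.Wallis.W_succ, centralBinomRatio_succ]
          push_cast
          field_simp
          ring
      _ = 1 := ih

lemma tendsto_two_mul_add_one_mul_centralBinomRatio_sq :
    Tendsto (fun N : ℕ => (2 * N + 1) * centralBinomRatio N ^ 2) atTop (𝓝 (2 / Real.pi)) := by
  have h := Real.Wallis.tendsto_W_nhds_pi_div_two.inv₀ (by positivity)
  rw [inv_div] at h
  refine h.congr fun N => ?_
  exact (eq_inv_of_mul_eq_one_right (wallis_mul_centralBinomRatio_sq N)).symm

noncomputable def term (n : ℕ) : ℝ :=
  (-1) ^ n * (4 * n + 1) / (4 * (n + 1) * (1 - 2 * n)) * centralBinomRatio n ^ 3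

lemma abs_term_le (n : ℕ) : |term n| ≤ 2 / (n + 1) ^ 2 := by
  have hcoeff : |(-1 : ℝ) ^ n * (4 * n + 1) / (4 * (n + 1) * (1 - 2 * n))| ≤ 2 / (n + 1) := by
    rcases n with _ | m
    · norm_num
    · have hm : (0 : ℝ) ≤ m := m.cast_nonneg
      rw [abs_div, abs_mul, abs_mul, abs_pow, abs_neg, abs_one, one_pow, one_mul]
      push_cast
      rw [abs_of_pos (by positivity), abs_of_pos (by positivity), abs_of_neg (by linarith),
        div_le_div_iff₀ (by nlinarith) (by positivity)]
      nlinarith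
  calc |term n|
        = |(-1 : ℝ) ^ n * (4 * n + 1) / (4 * (n + 1) * (1 - 2 * n))| * centralBinomRatio n ^ 3 := by
        rw [term, abs_mul, abs_of_pos (pow_pos (centralBinomRatio_pos n) 3)]
    _ ≤ 2 / (n + 1) * (1 / (n + 1)) :=
        mul_le_mul hcoeff (centralBinomRatio_pow_three_le n)
          (pow_pos (centralBinomRatio_pos n) 3).le (by positivity)
    _ = 2 / (n + 1) ^ 2 := by field_simp

lemma summable_norm_term : Summable fun n => ‖term n‖ := by
  have h : Summable fun n : ℕ => 2 / ((n : ℝ) + 1) ^ 2 := by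
    have := ((summable_nat_add_iff 1).mpr (Real.summable_one_div_nat_pow.mpr one_lt_two)).mul_left 2
    simpa [div_eq_mul_inv] using this
  exact h.of_nonneg_of_le (fun _ => norm_nonneg _) abs_term_le

noncomputable def weight (N n : ℕ) : ℝ := ∏ j ∈ range n, (2 * N - 2 * j : ℝ) / (2 * N + 2 * j + 3)

@[simp]
lemma weight_zero_right (N : ℕ) : weight N 0 = 1 := prod_range_zero _

lemma weight_succ (N n : ℕ) :
    weight N (n + 1) = weight N n * ((2 * N - 2 * n) / (2 * N + 2 * n + 3)) :=
  prod_range_succ _ _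

lemma weight_self_succ (N : ℕ) : weight N (N + 1) = 0 := by
  simp [weight_succ]

lemma abs_weight_le_one (N n : ℕ) : |weight N n| ≤ 1 := by
  rw [weight, abs_prod]
  refine prod_le_one (fun _ _ => abs_nonneg _) fun j _ => ?_
  rw [abs_div, abs_of_pos (by positivity : (0 : ℝ) < 2 * N + 2 * j + 3), div_le_one (by positivity),
    abs_le]
  constructor <;> linarith [(N.cast_nonneg : (0 : ℝ) ≤ N), (j.cast_nonneg : (0 : ℝ) ≤ j)]

lemma weight_succ_succ (N m : ℕ) :
    weight (N + 1) (m + 1) =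
      weight N m * ((2 * N + 2) * (2 * N + 3)) / ((2 * N + 2 * m + 3) * (2 * N + 2 * m + 5)) := by
  induction m with
  | zero =>
    rw [weight_succ, weight_zero_right, weight_zero_right]
    push_cast
    field_simp
    ring
  | succ m ih =>
    rw [weight_succ, ih, weight_succ]
    push_cast
    field_simp
    ring

lemma tendsto_weight_atTop (n : ℕ) : Tendsto (fun N => weight N n) atTop (𝓝 1) := by
  have hfactor (j : ℕ) :
      Tendsto (fun N : ℕ => (2 * N - 2 * j : ℝ) / (2 * N + 2 * j + 3)) atTop (𝓝 1) := by
    have hden : Tendsto (fun N : ℕ => (2 * N + 2 * j + 3 : ℝ)) atTop atTop :=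
      tendsto_atTop_add_const_right _ _ <| tendsto_atTop_add_const_right _ _ <|
        tendsto_natCast_atTop_atTop.const_mul_atTop two_pos
    have := (tendsto_const_nhds (x := (4 * j + 3 : ℝ))).div_atTop hden |>.const_sub 1
    rw [sub_zero] at this
    refine this.congr fun N => ?_
    field_simp
    ring
  have := tendsto_finsetProd (range n) fun j _ => hfactor j
  rwa [prod_const_one] at this

noncomputable def weightedSum (N : ℕ) : ℝ := ∑ n ∈ range (N + 1), term n * weight N n

-- A rational multiple of `term (n + 1) * weight N n`, as produced by Zeilberger's algorithm.
noncomputable def certificate (N : ℕ) : ℕ → ℝ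
  | 0 => 0
  | m + 1 => (-1) ^ m * centralBinomRatio (m + 1) ^ 3 * weight N m * (2 * N + 3) * (m + 1) ^ 2 /
      (2 * (2 * N + 2 * m + 3) * (N + 1) * (N + 2) * (2 * m + 1))

lemma certificate_self_add_two (N : ℕ) : certificate N (N + 2) = 0 := by
  rw [certificate, weight_self_succ]
  ring

lemma term_mul_weight_succ_sub (N n : ℕ) :
    term n * weight (N + 1) n - (2 * N + 3) ^ 2 * (N + 1) / ((N + 2) * (2 * N + 2) ^ 2) *
      (term n * weight N n) = certificate N n - certificate N (n + 1) := by
  rcases n with _ | m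
  · simp only [term, certificate, weight_zero_right, centralBinomRatio_succ, centralBinomRatio_zero]
    field_simp
    ring
  · rw [term, certificate, certificate, weight_succ_succ, weight_succ,
      centralBinomRatio_succ (m + 1)]
    push_cast
    rw [show (1 : ℝ) - 2 * (m + 1) = -(2 * m + 1) by ring]
    field_simp
    ring

lemma weightedSum_succ (N : ℕ) :
    weightedSum (N + 1) =
      (2 * N + 3) ^ 2 * (N + 1) / ((N + 2) * (2 * N + 2) ^ 2) * weightedSum N := by
  have hext : weightedSum N = ∑ n ∈ range (N + 2), term n * weight N n := by
    rw [sum_range_succ, weight_self_succ, mul_zero, add_zero, weightedSum]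
  rw [← sub_eq_zero, hext, mul_sum, weightedSum, ← sum_sub_distrib]
  simp only [term_mul_weight_succ_sub]
  rw [sum_range_sub', certificate_self_add_two, certificate, sub_zero]

lemma weightedSum_eq (N : ℕ) :
    weightedSum N = (2 * N + 1) ^ 2 / (4 * (N + 1)) * centralBinomRatio N ^ 2 := by
  induction N with
  | zero => norm_num [weightedSum, term]
  | succ N ih =>
    rw [weightedSum_succ, ih, centralBinomRatio_succ]
    push_cast
    field_simp
    ring

lemma tendsto_weightedSum_one_div_pi : Tendsto weightedSum atTop (𝓝 (1 / Real.pi)) := by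
  have h : Tendsto (fun N : ℕ => (2 * N + 1 : ℝ) / (4 * (N + 1))) atTop (𝓝 (1 / 2)) := by
    have := (tendsto_one_div_add_atTop_nhds_zero_nat.const_mul (1 / 4 : ℝ)).const_sub (1 / 2 : ℝ)
    rw [mul_zero, sub_zero] at this
    refine this.congr fun N => ?_
    field_simp
    ring
  convert tendsto_two_mul_add_one_mul_centralBinomRatio_sq.mul h using 2
  · rw [weightedSum_eq]
    ring
  · ring

lemma tendsto_weightedSum_tsum : Tendsto weightedSum atTop (𝓝 (∑' n, term n)) :=
  tendsto_sum_range_mul_of_tendsto_one summable_norm_term abs_weight_le_one tendsto_weight_atTop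

end CentralBinomCubeSeries

open CentralBinomCubeSeries in
theorem stmt_0 :
    ∑' n : ℕ, ((-1 : ℝ) ^ n * (4 * n + 1) / (4 * (n + 1) * (1 - 2 * n))) *
      ((Nat.centralBinom n : ℝ) / 4 ^ n) ^ 3 = 1 / Real.pi :=
  tendsto_nhds_unique tendsto_weightedSum_tsum tendsto_weightedSum_one_div_pi
end

section
/- The series ∑_{n≥0} 3(4n+1) / (32(n+1)^2(1-2n)^2) · (C(2n,n)/4^n)^4 equals 1/π². -/
/-!
Writing `u n = C(2n,n) / 4^n`, the summand is `D (n + 1) - D n` for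
`D n = n² (8n² - 4n - 1) / (2 (2n - 1)²) · u n ⁴`, and `D 0 = 0`, so the series sums to `lim D n`.
Since `u (n + 1) = u n · (2n + 1) / (2n + 2)`, we get `(2n + 1) · W n · (u n)² = 1` for the Wallis
product `W n → π / 2`; hence `n · (u n)² → 1 / π` and `D n → 1 / π²`.
-/

open Filter Topology Real Nat

lemma centralBinom_div_four_pow_succ (n : ℕ) :
    (centralBinom (n + 1) : ℝ) / 4 ^ (n + 1) =
      centralBinom n / 4 ^ n * ((2 * n + 1) / (2 * n + 2)) := by
  have h : ((n : ℝ) + 1) * centralBinom (n + 1) = 2 * (2 * n + 1) * centralBinom n := by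
    exact_mod_cast succ_mul_centralBinom_succ n
  field_simp
  rw [pow_succ]
  linear_combination (4 : ℝ) ^ n * 2 * h

lemma two_mul_add_one_mul_W_mul_centralBinom_div_four_pow_sq (n : ℕ) :
    (2 * n + 1) * Wallis.W n * ((centralBinom n : ℝ) / 4 ^ n) ^ 2 = 1 := by
  induction n with
  | zero => simp [Wallis.W]
  | succ n ih =>
    refine Eq.trans ?_ ih
    rw [Wallis.W_succ, centralBinom_div_four_pow_succ]
    push_cast
    field_simp
    ring

lemma tendsto_natCast_mul_centralBinom_div_four_pow_sq :
    Tendsto (fun n : ℕ => n * ((centralBinom n : ℝ) / 4 ^ n) ^ 2) atTop (𝓝 (1 / π)) := by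
  have hlin : Tendsto (fun n : ℕ => (n : ℝ) / (2 * n + 1)) atTop (𝓝 (1 / 2)) := by
    have := (tendsto_natCast_div_add_atTop (1 / 2 : ℝ)).div_const 2
    refine (this.congr fun n => ?_).trans (by norm_num)
    field_simp
  have hdiv : Tendsto (fun n : ℕ => (n : ℝ) / (2 * n + 1) / Wallis.W n) atTop (𝓝 (1 / π)) := by
    have h := hlin.div Wallis.tendsto_W_nhds_pi_div_two (by positivity)
    rwa [show (1 : ℝ) / 2 / (π / 2) = 1 / π by field_simp] at h
  refine hdiv.congr fun n => ?_
  have h := two_mul_add_one_mul_W_mul_centralBinom_div_four_pow_sq n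
  generalize (centralBinom n : ℝ) / 4 ^ n = u at h ⊢
  have hW := Wallis.W_pos n
  rw [div_div, div_eq_iff (by positivity)]
  linear_combination -(n : ℝ) * h

lemma tendsto_partialSum_factor :
    Tendsto (fun n : ℕ => (8 * (n : ℝ) ^ 2 - 4 * n - 1) / (2 * (2 * n - 1) ^ 2)) atTop (𝓝 1) := by
  have hcont : Tendsto (fun x : ℝ => (8 - 4 * x - x ^ 2) / (2 * (2 - x) ^ 2)) (𝓝 0) (𝓝 1) := by
    have : ContinuousAt (fun x : ℝ => (8 - 4 * x - x ^ 2) / (2 * (2 - x) ^ 2)) 0 := by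
      fun_prop (disch := norm_num)
    convert this.tendsto using 2
    norm_num
  refine (hcont.comp tendsto_inv_atTop_nhds_zero_nat).congr' ?_
  filter_upwards [eventually_ge_atTop 1] with n hn
  have hn : (1 : ℝ) ≤ n := by exact_mod_cast hn
  have : (2 - (n : ℝ)⁻¹) ≠ 0 := by
    have : (n : ℝ)⁻¹ ≤ 1 := inv_le_one_of_one_le₀ hn
    linarith
  simp only [Function.comp]
  field_simp

lemma hasSum_of_eq_sub_of_tendsto {f g : ℕ → ℝ} {l : ℝ} (hf : ∀ n, 0 ≤ f n)
    (hfg : ∀ n, f n = g (n + 1) - g n) (hg : Tendsto g atTop (𝓝 l)) : HasSum f (l - g 0) := by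
  rw [hasSum_iff_tendsto_nat_of_nonneg hf]
  simp_rw [hfg, Finset.sum_range_sub]
  exact hg.sub_const (g 0)

-- Found by Gosper's algorithm.
noncomputable def partialSum (n : ℕ) : ℝ :=
  n ^ 2 * (8 * n ^ 2 - 4 * n - 1) / (2 * (2 * n - 1) ^ 2) * ((centralBinom n : ℝ) / 4 ^ n) ^ 4

lemma summand_eq_partialSum_succ_sub (n : ℕ) :
    3 * (4 * (n : ℝ) + 1) / (32 * (n + 1) ^ 2 * (1 - 2 * n) ^ 2) *
      ((centralBinom n : ℝ) / 4 ^ n) ^ 4 = partialSum (n + 1) - partialSum n := by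
  rw [partialSum, partialSum, centralBinom_div_four_pow_succ]
  generalize (centralBinom n : ℝ) / 4 ^ n = u
  have hodd : (n : ℝ) * 2 - 1 ≠ 0 := sub_ne_zero.mpr (by exact_mod_cast (by omega : n * 2 ≠ 1))
  push_cast
  rw [show 2 * ((n : ℝ) + 1) - 1 = 2 * n + 1 by ring,
    show (1 - 2 * (n : ℝ)) ^ 2 = (2 * n - 1) ^ 2 by ring]
  field_simp
  ring

lemma tendsto_partialSum : Tendsto partialSum atTop (𝓝 (1 / π ^ 2)) := by
  have h := (tendsto_natCast_mul_centralBinom_div_four_pow_sq.pow 2).mul tendsto_partialSum_factor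
  rw [div_pow, one_pow, mul_one] at h
  refine h.congr fun n => ?_
  rw [partialSum]
  ring

theorem stmt_1 :
    ∑' n : ℕ, (3 * (4 * (n : ℝ) + 1) / (32 * (n + 1) ^ 2 * (1 - 2 * n) ^ 2)) *
      ((Nat.centralBinom n : ℝ) / 4 ^ n) ^ 4 = 1 / Real.pi ^ 2 := by
  have h := hasSum_of_eq_sub_of_tendsto (fun _ => by positivity) summand_eq_partialSum_succ_sub
    tendsto_partialSum
  simpa [partialSum] using h.tsum_eq
end

section
/- The series ∑_{n≥0} (8n²+8n+1)/(n+1)² · (C(2n,n)/4^n)^4 equals 16/π². -/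
/-!
With `c n = C(2n,n) / 4^n` the series telescopes: its `n`-th term is `g (n+1) - g n` for
`g n = 16 (n c_n²)²`, because `c (n+1) = c n (2n+1) / (2n+2)`. The partial sums are thus `g N`,
and the `n`-th Wallis partial product, which is `1 / ((2n+1) c_n²)` and tends to `π/2`, gives
`n c_n² → 1/π`, so the sum is `16/π²`.
-/

open Filter Topology Finset

theorem hasSum_sub_succ_of_monotone {f : ℕ → ℝ} {l : ℝ} (hf : Monotone f)
    (hl : Tendsto f atTop (𝓝 l)) : HasSum (fun n => f (n + 1) - f n) (l - f 0) := by
  rw [hasSum_iff_tendsto_nat_of_nonneg fun n => sub_nonneg.2 (hf n.le_succ)]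
  simpa only [sum_range_sub] using hl.sub_const (f 0)

noncomputable def normalizedCentralBinom (n : ℕ) : ℝ := (Nat.centralBinom n : ℝ) / 4 ^ n

local notation "c" => normalizedCentralBinom

theorem normalizedCentralBinom_succ (n : ℕ) :
    c (n + 1) = c n * (2 * n + 1) / (2 * n + 2) := by
  have h : ((n : ℝ) + 1) * Nat.centralBinom (n + 1) = 2 * (2 * n + 1) * Nat.centralBinom n := by
    exact_mod_cast Nat.succ_mul_centralBinom_succ n
  unfold normalizedCentralBinom
  rw [pow_succ]
  field_simp
  linear_combination 2 * h

theorem Real.Wallis.W_mul_normalizedCentralBinom_sq (n : ℕ) :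
    Real.Wallis.W n * ((2 * n + 1) * c n ^ 2) = 1 := by
  induction n with
  | zero => simp [Real.Wallis.W, normalizedCentralBinom]
  | succ n ih =>
    rw [Real.Wallis.W_succ, normalizedCentralBinom_succ]
    push_cast
    field_simp
    linear_combination (2 * (n : ℝ) + 3) * ih

theorem tendsto_mul_normalizedCentralBinom_sq :
    Tendsto (fun n : ℕ => (n : ℝ) * c n ^ 2) atTop (𝓝 (1 / Real.pi)) := by
  have hodd : Tendsto (fun n : ℕ => (2 * n + 1) * c n ^ 2) atTop (𝓝 (Real.pi / 2)⁻¹) := by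
    refine (Real.Wallis.tendsto_W_nhds_pi_div_two.inv₀ (by positivity)).congr fun n => ?_
    exact inv_eq_of_mul_eq_one_right (Real.Wallis.W_mul_normalizedCentralBinom_sq n)
  have hratio := tendsto_natCast_div_add_atTop (1 / 2 : ℝ)
  convert (hodd.mul hratio).div_const 2 using 1
  · ext n
    field_simp
  · field_simp

theorem summand_eq_sub_succ (n : ℕ) :
    (8 * (n : ℝ) ^ 2 + 8 * n + 1) / (n + 1) ^ 2 * c n ^ 4 =
      16 * (((n + 1 : ℕ) : ℝ) * c (n + 1) ^ 2) ^ 2 - 16 * ((n : ℝ) * c n ^ 2) ^ 2 := by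
  rw [normalizedCentralBinom_succ]
  push_cast
  field_simp
  ring

theorem stmt_2 :
    ∑' n : ℕ, ((8 * (n : ℝ) ^ 2 + 8 * n + 1) / (n + 1) ^ 2) *
      ((Nat.centralBinom n : ℝ) / 4 ^ n) ^ 4 = 16 / Real.pi ^ 2 := by
  set g : ℕ → ℝ := fun n => 16 * ((n : ℝ) * c n ^ 2) ^ 2
  have hg_mono : Monotone g := monotone_nat_of_le_succ fun n => by
    rw [← sub_nonneg, ← summand_eq_sub_succ]
    positivity
  have hg_lim : Tendsto g atTop (𝓝 (16 / Real.pi ^ 2)) := by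
    convert (tendsto_mul_normalizedCentralBinom_sq.pow 2).const_mul 16 using 2
    ring
  have hg_zero : g 0 = 0 := by simp [g]
  refine HasSum.tsum_eq ?_
  convert hasSum_sub_succ_of_monotone hg_mono hg_lim using 1
  · ext n
    exact summand_eq_sub_succ n
  · rw [hg_zero, sub_zero]
end

section
/- The series ∑_{n≥0} 9(4n+1)(-1)^n / (8(n+1)(n+2)(1-2n)(3-2n)) · (C(2n,n)/4^n)^3 equals 1/π. -/
/-!
Wilf–Zeilberger deformation. Replace `(-1)^n` in the summand by `(-m)_n / (m + 3/2)_n`, which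
tends to `(-1)^n` as `m → ∞` and vanishes for `n > m`. The deformed sums are then finite, and a WZ
certificate shows they satisfy a first-order recurrence in `m`, whose solution is
`(2m+1) a_m a_{m+2} / 2` with `a_m = C(2m,m)/4^m`. By Wallis' product this tends to `1/π`, and
Tannery's theorem (dominated convergence for series) identifies the limit with the original series.
-/

open Filter Finset Topology

noncomputable def normCentralBinom (n : ℕ) : ℝ := n.centralBinom / 4 ^ n

lemma normCentralBinom_pos (n : ℕ) : 0 < normCentralBinom n := by
  have := n.centralBinom_pos
  unfold normCentralBinom
  positivity

@[simp] lemma normCentralBinom_zero : normCentralBinom 0 = 1 := by simp [normCentralBinom]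

lemma normCentralBinom_succ (n : ℕ) :
    normCentralBinom (n + 1) = normCentralBinom n * ((2 * n + 1) / (2 * n + 2)) := by
  have h : ((n + 1 : ℕ) : ℝ) * (n + 1).centralBinom = 2 * (2 * n + 1) * n.centralBinom := by
    exact_mod_cast n.succ_mul_centralBinom_succ
  unfold normCentralBinom
  rw [pow_succ]
  push_cast at h
  field_simp
  linear_combination 2 * h

lemma normCentralBinom_le_one (n : ℕ) : normCentralBinom n ≤ 1 := by
  induction n with
  | zero => simp
  | succ k ih =>
    rw [normCentralBinom_succ]
    exact mul_le_one₀ ih (by positivity) ((div_le_one (by positivity)).2 (by linarith))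

lemma Real.Wallis.W_eq_inv_normCentralBinom_sq (k : ℕ) :
    Real.Wallis.W k = ((2 * k + 1) * normCentralBinom k ^ 2)⁻¹ := by
  induction k with
  | zero => simp [Real.Wallis.W]
  | succ k ih =>
    have := normCentralBinom_pos k
    rw [Real.Wallis.W_succ, ih, normCentralBinom_succ]
    push_cast
    field_simp
    ring

lemma tendsto_mul_normCentralBinom_sq :
    Tendsto (fun m : ℕ => (2 * m + 1) * normCentralBinom m ^ 2) atTop (𝓝 (2 / Real.pi)) := by
  have h := Real.Wallis.tendsto_W_nhds_pi_div_two.inv₀ (by positivity)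
  simp_rw [Real.Wallis.W_eq_inv_normCentralBinom_sq, inv_inv, inv_div] at h
  exact h

lemma tendsto_mul_normCentralBinom_mul_add_two :
    Tendsto (fun m : ℕ => (2 * m + 1) * normCentralBinom m * normCentralBinom (m + 2) / 2)
      atTop (𝓝 (1 / Real.pi)) := by
  have hratio (c : ℝ) : Tendsto (fun m : ℕ => (c + 2 * m) / (c + 1 + 2 * m)) atTop (𝓝 1) := by
    simpa using tendsto_add_mul_div_add_mul_atTop_nhds c (c + 1) 2 two_ne_zero
  have h := ((tendsto_mul_normCentralBinom_sq.mul ((hratio 1).mul (hratio 3))).div_const 2)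
  convert h using 1
  · ext m
    rw [normCentralBinom_succ, normCentralBinom_succ]
    push_cast
    ring
  · field_simp

noncomputable def pochRatio (n m : ℕ) : ℝ := ∏ i ∈ range n, ((i - m : ℝ) / (m + 3 / 2 + i))

lemma pochRatio_succ (n m : ℕ) :
    pochRatio (n + 1) m = pochRatio n m * ((n - m) / (m + 3 / 2 + n)) :=
  prod_range_succ _ _

lemma pochRatio_eq_zero {n m : ℕ} (h : m < n) : pochRatio n m = 0 :=
  prod_eq_zero (mem_range.2 h) (by simp)

lemma abs_pochRatio_le_one (n m : ℕ) : |pochRatio n m| ≤ 1 := by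
  rw [pochRatio, abs_prod]
  refine prod_le_one (fun _ _ => abs_nonneg _) fun i _ => ?_
  rw [abs_div, abs_of_pos (a := (m + 3 / 2 + i : ℝ)) (by positivity), div_le_one (by positivity),
    abs_le]
  constructor <;> linarith [(i.cast_nonneg : (0 : ℝ) ≤ i), (m.cast_nonneg : (0 : ℝ) ≤ m)]

lemma pochRatio_succ_succ (k m : ℕ) :
    pochRatio (k + 1) (m + 1)
      = -(m + 1) * (m + 3 / 2) * pochRatio k m / ((m + k + 3 / 2) * (m + k + 5 / 2)) := by
  induction k with
  | zero =>
    rw [pochRatio_succ]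
    simp only [pochRatio, prod_range_zero, CharP.cast_eq_zero]
    push_cast
    field_simp
    ring
  | succ k ih =>
    rw [pochRatio_succ, ih, pochRatio_succ k m]
    push_cast
    field_simp
    ring

lemma tendsto_pochRatio (n : ℕ) : Tendsto (pochRatio n) atTop (𝓝 ((-1) ^ n)) := by
  have h : (-1 : ℝ) ^ n = ∏ _i ∈ range n, (-1 : ℝ) := by simp
  rw [h]
  refine tendsto_finsetProd _ fun i _ => ?_
  simpa [sub_eq_add_neg, add_comm, add_left_comm] using
    tendsto_add_mul_div_add_mul_atTop_nhds (i : ℝ) (3 / 2 + i) (-1) one_ne_zero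

lemma two_mul_natCast_sub_one_ne_zero (k : ℕ) : (2 * k - 1 : ℝ) ≠ 0 := by
  intro h
  have : (2 * k : ℝ) = 1 := by linarith
  norm_cast at this
  omega

noncomputable def wzTerm (n m : ℕ) : ℝ :=
  9 * (4 * n + 1) * pochRatio n m / (8 * (n + 1) * (n + 2) * (1 - 2 * n) * (3 - 2 * n)) *
    normCentralBinom n ^ 3

-- Found by Zeilberger's algorithm.
noncomputable def wzCert : ℕ → ℕ → ℝ
  | 0, _ => 0
  | n + 1, m => 9 * (2 * m + 3) * (n + 1) ^ 2 * pochRatio n m /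
      (4 * (m + 1) * (m + 3) * (n + 2) * (2 * n + 1) * (2 * n - 1) * (2 * m + 2 * n + 3)) *
      normCentralBinom (n + 1) ^ 3

noncomputable def wzRatio (m : ℕ) : ℝ := (2 * m + 3) * (2 * m + 5) / ((2 * m + 2) * (2 * m + 6))

lemma wzTerm_sub_wzRatio_mul (n m : ℕ) :
    wzTerm n (m + 1) - wzRatio m * wzTerm n m = wzCert (n + 1) m - wzCert n m := by
  cases n with
  | zero =>
    simp only [wzTerm, wzCert, wzRatio, pochRatio, prod_range_zero, normCentralBinom_succ,
      normCentralBinom_zero, CharP.cast_eq_zero]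
    field_simp
    ring
  | succ k =>
    simp only [wzTerm, wzCert, wzRatio]
    rw [pochRatio_succ_succ, pochRatio_succ, normCentralBinom_succ (k + 1)]
    push_cast
    rw [show (1 - 2 * (k + 1) : ℝ) = -(2 * k + 1) by ring,
      show (3 - 2 * (k + 1) : ℝ) = -(2 * k - 1) by ring,
      show (2 * (k + 1) - 1 : ℝ) = 2 * k + 1 by ring]
    -- `field_simp` only sees that `2 * k - 1 ≠ 0` when this factor is an atom.
    have hd := two_mul_natCast_sub_one_ne_zero k
    set d : ℝ := 2 * k - 1 with d_def
    field_simp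
    rw [d_def]
    ring

lemma wzTerm_eq_zero {n m : ℕ} (h : m < n) : wzTerm n m = 0 := by
  simp [wzTerm, pochRatio_eq_zero h]

lemma sum_range_wz {R : Type*} [CommRing R] {F G : ℕ → ℕ → R} {r : ℕ → R}
    (h : ∀ n m, F n (m + 1) - r m * F n m = G (n + 1) m - G n m) (N m : ℕ) :
    ∑ n ∈ range N, F n (m + 1) = r m * ∑ n ∈ range N, F n m + (G N m - G 0 m) := by
  rw [mul_sum, ← sum_range_sub (G · m), ← sum_add_distrib]
  exact sum_congr rfl fun n _ => by rw [← h]; ring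

lemma sum_wzTerm (m : ℕ) :
    ∑ n ∈ range (m + 1), wzTerm n m
      = (2 * m + 1) * normCentralBinom m * normCentralBinom (m + 2) / 2 := by
  induction m with
  | zero =>
    norm_num [wzTerm, pochRatio, normCentralBinom_succ]
  | succ m ih =>
    have hcert : wzCert (m + 2) m = 0 := by simp [wzCert, pochRatio_eq_zero (Nat.lt_succ_self m)]
    rw [sum_range_wz wzTerm_sub_wzRatio_mul, sum_range_succ _ (m + 1),
      wzTerm_eq_zero (Nat.lt_succ_self m), add_zero, ih, hcert, wzCert, sub_zero, add_zero,
      normCentralBinom_succ m, normCentralBinom_succ (m + 2), wzRatio]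
    push_cast
    field_simp
    ring

lemma tsum_wzTerm (m : ℕ) :
    ∑' n, wzTerm n m = (2 * m + 1) * normCentralBinom m * normCentralBinom (m + 2) / 2 := by
  rw [tsum_eq_sum (s := range (m + 1)) fun n hn => wzTerm_eq_zero (by simpa using hn), sum_wzTerm]

lemma abs_wzCoeff_le (n : ℕ) :
    |9 * (4 * n + 1) / (8 * (n + 1) * (n + 2) * (1 - 2 * n) * (3 - 2 * n) : ℝ)|
      ≤ 6 / (n + 1) ^ 2 := by
  rcases n with _ | _ | k
  · norm_num
  · norm_num
  · have hk : (0 : ℝ) ≤ k := k.cast_nonneg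
    push_cast
    have hden : (0 : ℝ) <
        8 * (k + 1 + 1 + 1) * (k + 1 + 1 + 2) * (1 - 2 * (k + 1 + 1)) * (3 - 2 * (k + 1 + 1)) := by
      nlinarith [mul_nonneg hk hk, mul_nonneg (mul_nonneg hk hk) hk]
    rw [abs_of_pos (div_pos (by positivity) hden), div_le_div_iff₀ hden (by positivity)]
    nlinarith [mul_nonneg hk hk, mul_nonneg (mul_nonneg hk hk) hk]

lemma abs_wzTerm_le (n m : ℕ) : |wzTerm n m| ≤ 6 / (n + 1) ^ 2 := by
  have ha := normCentralBinom_pos n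
  have ha_le : normCentralBinom n ^ 3 ≤ 1 := pow_le_one₀ ha.le (normCentralBinom_le_one n)
  rw [wzTerm, mul_div_right_comm, abs_mul, abs_mul, abs_pow, abs_of_pos ha]
  refine (abs_wzCoeff_le n).trans' ?_
  exact (mul_le_of_le_one_right (by positivity) ha_le).trans
    (mul_le_of_le_one_right (abs_nonneg _) (abs_pochRatio_le_one n m))

lemma tendsto_wzTerm (n : ℕ) :
    Tendsto (wzTerm n) atTop (𝓝 (9 * (4 * n + 1) * (-1) ^ n /
      (8 * (n + 1) * (n + 2) * (1 - 2 * n) * (3 - 2 * n)) * normCentralBinom n ^ 3)) :=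
  (((tendsto_pochRatio n).const_mul _).div_const _).mul_const _

theorem stmt_3 :
    ∑' n : ℕ, (9 * (4 * (n : ℝ) + 1) * (-1) ^ n /
        (8 * (n + 1) * (n + 2) * (1 - 2 * n) * (3 - 2 * n))) *
      ((Nat.centralBinom n : ℝ) / 4 ^ n) ^ 3 = 1 / Real.pi := by
  have hsummable : Summable fun n : ℕ => 6 / ((n : ℝ) + 1) ^ 2 := by
    have := (summable_nat_add_iff 1).2 (Real.summable_one_div_nat_pow.2 one_lt_two)
    simpa [div_eq_mul_inv] using this.mul_left 6
  have hlim := tendsto_tsum_of_dominated_convergence hsummable tendsto_wzTerm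
    (Eventually.of_forall fun m n => abs_wzTerm_le n m)
  simp_rw [tsum_wzTerm] at hlim
  exact tendsto_nhds_unique hlim tendsto_mul_normCentralBinom_mul_add_two
end

section
/- The series ∑_{n≥0} (1/(4n+1)) (C(2n,n)/4^n)² equals Γ(1/4)^4 / (16π²). -/
/-!
Write `a n = C(2n,n)/4^n` (`wallisRatio n`), so that `∫₀^{π/2} sin^{2n} = (π/2) a n` and
`∑ a n yⁿ = (1 - y)^{-1/2}`. The lemniscatic arcsine `arcsl x = ∑ a n x^{4n+1}/(4n+1)`, which is
`∫₀ˣ dt/√(1 - t⁴)`, satisfies `d/dθ arcsl(√(sin θ))² = ∑ a n sin^{2n} θ/(4n+1)`, because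
`√(1 - sin² θ) = cos θ` cancels the derivative of `√(sin θ)`. Integrating this termwise over
`[0, π/2]` shows that the series equals `(2/π) arcsl(1)²`. Integrating
`x^{-3/4}(1 - x)^{-1/2} = ∑ a n x^{n-3/4}` termwise over `(0, 1)` gives
`arcsl 1 = B(1/4, 1/2)/4 = Γ(1/4)Γ(1/2)/(4Γ(3/4))`, and the reflection formula
`Γ(1/4)Γ(3/4) = π√2` turns this into `arcsl(1)² = Γ(1/4)⁴/(32π)`.
-/

open MeasureTheory Real Set

theorem integral_tsum_of_nonneg {α ι : Type*} [MeasurableSpace α] [Countable ι]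
    {μ : Measure α} {f : ι → α → ℝ} (hf : ∀ i, Integrable (f i) μ) (hf0 : ∀ i, 0 ≤ᵐ[μ] f i)
    (hsum : Summable fun i => ∫ a, f i a ∂μ) :
    ∫ a, ∑' i, f i a ∂μ = ∑' i, ∫ a, f i a ∂μ := by
  refine (integral_tsum_of_summable_integral_norm hf (hsum.congr fun i => ?_)).symm
  exact integral_congr_ae <| (hf0 i).mono fun a ha => (Real.norm_of_nonneg ha).symm

noncomputable def wallisRatio (n : ℕ) : ℝ := (Nat.centralBinom n : ℝ) / 4 ^ n

lemma wallisRatio_pos (n : ℕ) : 0 < wallisRatio n :=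
  div_pos (by exact_mod_cast Nat.centralBinom_pos n) (by positivity)

lemma wallisRatio_le_one (n : ℕ) : wallisRatio n ≤ 1 :=
  div_le_one_of_le₀ (by exact_mod_cast Nat.centralBinom_le_four_pow n) (by positivity)

lemma wallisRatio_succ (n : ℕ) :
    wallisRatio (n + 1) = wallisRatio n * ((2 * n + 1) / (2 * n + 2)) := by
  have h : ((n : ℝ) + 1) * Nat.centralBinom (n + 1) = 2 * (2 * n + 1) * Nat.centralBinom n := by
    exact_mod_cast Nat.succ_mul_centralBinom_succ n
  rw [wallisRatio, wallisRatio, pow_succ, div_eq_iff (by positivity)]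
  field_simp
  linear_combination 2 * h

lemma wallisRatio_sq_mul_le_one (n : ℕ) : wallisRatio n ^ 2 * (2 * n + 1) ≤ 1 := by
  induction n with
  | zero => simp [wallisRatio]
  | succ n ih =>
    have hstep : ((2 * n + 1 : ℝ) / (2 * n + 2)) ^ 2 * (2 * n + 3) ≤ 2 * n + 1 := by
      rw [div_pow, div_mul_eq_mul_div, div_le_iff₀ (by positivity)]
      nlinarith
    calc wallisRatio (n + 1) ^ 2 * (2 * (n + 1 : ℕ) + 1)
        = wallisRatio n ^ 2 * (((2 * n + 1) / (2 * n + 2)) ^ 2 * (2 * n + 3)) := by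
          rw [wallisRatio_succ]; push_cast; ring
      _ ≤ wallisRatio n ^ 2 * (2 * n + 1) := by gcongr
      _ ≤ 1 := ih

lemma prod_range_eq_wallisRatio (n : ℕ) :
    ∏ i ∈ Finset.range n, (2 * (i : ℝ) + 1) / (2 * i + 2) = wallisRatio n := by
  induction n with
  | zero => simp [wallisRatio]
  | succ n ih => rw [Finset.prod_range_succ, ih, wallisRatio_succ]

lemma integral_sin_pow_even_half (n : ℕ) :
    ∫ x in (0 : ℝ)..π / 2, sin x ^ (2 * n) = π / 2 * wallisRatio n := by
  have hcont : Continuous fun x => sin x ^ (2 * n) := by fun_prop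
  have hsymm :
      ∫ x in π / 2..π, sin x ^ (2 * n) = ∫ x in (0 : ℝ)..π / 2, sin x ^ (2 * n) := by
    simpa [sin_pi_sub, sub_half] using
      intervalIntegral.integral_comp_sub_left (fun x => sin x ^ (2 * n)) π (a := π / 2) (b := π)
  have hsplit := intervalIntegral.integral_add_adjacent_intervals
    (hcont.intervalIntegrable (μ := volume) 0 (π / 2))
    (hcont.intervalIntegrable (μ := volume) (π / 2) π)
  rw [hsymm, integral_sin_pow_even, prod_range_eq_wallisRatio] at hsplit
  linarith

lemma multichoose_half_eq_wallisRatio (n : ℕ) :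
    Ring.multichoose (1 / 2 : ℝ) n = wallisRatio n := by
  have hfac : (n.factorial : ℝ) ≠ 0 := by positivity
  rw [← mul_right_inj' hfac, ← nsmul_eq_mul, Ring.factorial_nsmul_multichoose_eq_ascPochhammer,
    Polynomial.ascPochhammer_smeval_eq_eval]
  induction n with
  | zero => simp [wallisRatio]
  | succ n ih =>
    rw [ascPochhammer_succ_eval, ih (by positivity), wallisRatio_succ, Nat.factorial_succ]
    push_cast
    field_simp
    ring

lemma hasSum_wallisRatio_mul_pow {y : ℝ} (hy : |y| < 1) :
    HasSum (fun n => wallisRatio n * y ^ n) (1 / √(1 - y)) := by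
  have h := (one_div_one_sub_rpow_hasFPowerSeriesOnBall_zero (1 / 2)).hasSum
    (y := y) (by simpa [enorm_eq_nnnorm, ← NNReal.coe_lt_one] using hy)
  simp only [FormalMultilinearSeries.ofScalars_apply_eq, zero_add, smul_eq_mul,
    ← Ring.multichoose_eq, multichoose_half_eq_wallisRatio] at h
  rwa [sqrt_eq_rpow]

noncomputable def arcslCoeff (n : ℕ) : ℝ := wallisRatio n / (4 * n + 1)

lemma arcslCoeff_pos (n : ℕ) : 0 < arcslCoeff n :=
  div_pos (wallisRatio_pos n) (by positivity)

lemma arcslCoeff_le_rpow (n : ℕ) : arcslCoeff n ≤ ((n : ℝ) + 1) ^ (-(3 / 2 : ℝ)) := by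
  have hn : (0 : ℝ) < n + 1 := by positivity
  have hrpow : (((n : ℝ) + 1) ^ (-(3 / 2 : ℝ))) ^ 2 = (((n : ℝ) + 1) ^ 3)⁻¹ := by
    rw [← rpow_mul_natCast hn.le, ← rpow_natCast, ← rpow_neg hn.le]
    norm_num
  have hw := wallisRatio_sq_mul_le_one n
  have hsq : arcslCoeff n ^ 2 ≤ (((n : ℝ) + 1) ^ (-(3 / 2 : ℝ))) ^ 2 := by
    rw [hrpow, arcslCoeff, div_pow, div_le_iff₀ (by positivity), inv_mul_eq_div,
      le_div_iff₀ (by positivity)]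
    have hcube : ((n : ℝ) + 1) ^ 3 ≤ (2 * n + 1) * (4 * n + 1) ^ 2 := by nlinarith
    nlinarith [mul_le_mul_of_nonneg_left hcube (sq_nonneg (wallisRatio n))]
  exact (pow_le_pow_iff_left₀ (arcslCoeff_pos n).le (by positivity) two_ne_zero).1 hsq

lemma summable_arcslCoeff : Summable arcslCoeff := by
  refine Summable.of_nonneg_of_le (fun n => (arcslCoeff_pos n).le) arcslCoeff_le_rpow ?_
  exact_mod_cast (summable_nat_add_iff 1).2
    (summable_nat_rpow.2 (by norm_num : -(3 / 2 : ℝ) < -1))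

noncomputable def arcsl (x : ℝ) : ℝ := ∑' n, arcslCoeff n * x ^ (4 * n + 1)

lemma arcsl_one : arcsl 1 = ∑' n, arcslCoeff n := by simp [arcsl]

lemma arcsl_sqrt {s : ℝ} (hs : 0 ≤ s) :
    arcsl (√s) = √s * ∑' n, arcslCoeff n * s ^ (2 * n) := by
  rw [arcsl, ← tsum_mul_left]
  congr 1 with n
  rw [pow_succ, show 4 * n = 2 * (2 * n) by ring, pow_mul, sq_sqrt hs]
  ring

lemma continuousOn_arcsl : ContinuousOn arcsl (Icc (-1) 1) := by
  refine continuousOn_tsum (fun n => by fun_prop) summable_arcslCoeff fun n x hx => ?_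
  rw [norm_mul, norm_pow, norm_of_nonneg (arcslCoeff_pos n).le]
  exact mul_le_of_le_one_right (arcslCoeff_pos n).le
    (pow_le_one₀ (norm_nonneg x) (abs_le.2 hx))

lemma continuous_tsum_arcslCoeff_mul_sin_pow :
    Continuous fun θ => ∑' n, arcslCoeff n * sin θ ^ (2 * n) := by
  refine continuous_tsum (fun n => by fun_prop) summable_arcslCoeff fun n θ => ?_
  rw [norm_mul, norm_pow, norm_of_nonneg (arcslCoeff_pos n).le]
  exact mul_le_of_le_one_right (arcslCoeff_pos n).le
    (pow_le_one₀ (norm_nonneg _) (abs_sin_le_one θ))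

lemma arcsl_eq_integral {x : ℝ} (hx0 : 0 ≤ x) (hx1 : x < 1) :
    arcsl x = ∫ t in (0 : ℝ)..x, 1 / √(1 - t ^ 4) := by
  have hterm (n : ℕ) :
      ∫ t in Ioc 0 x, wallisRatio n * t ^ (4 * n) = arcslCoeff n * x ^ (4 * n + 1) := by
    rw [← intervalIntegral.integral_of_le hx0, intervalIntegral.integral_const_mul,
      integral_pow, arcslCoeff]
    push_cast
    ring
  have hsum : Summable fun n => ∫ t in Ioc 0 x, wallisRatio n * t ^ (4 * n) := by
    simp_rw [hterm]
    refine summable_arcslCoeff.of_nonneg_of_le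
      (fun n => mul_nonneg (arcslCoeff_pos n).le (pow_nonneg hx0 _)) fun n => ?_
    exact mul_le_of_le_one_right (arcslCoeff_pos n).le (pow_le_one₀ hx0 hx1.le)
  have hseries : ∀ t ∈ Ioc 0 x, ∑' n, wallisRatio n * t ^ (4 * n) = 1 / √(1 - t ^ 4) := by
    intro t ht
    have ht4 : |t ^ 4| < 1 := by
      rw [abs_of_nonneg (by positivity)]
      exact pow_lt_one₀ ht.1.le (ht.2.trans_lt hx1) (by norm_num)
    simpa [← pow_mul] using (hasSum_wallisRatio_mul_pow ht4).tsum_eq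
  rw [intervalIntegral.integral_of_le hx0, ← setIntegral_congr_fun measurableSet_Ioc hseries,
    integral_tsum_of_nonneg (fun n => (by fun_prop : Continuous _).integrableOn_Ioc)
      (fun n => (ae_restrict_iff' measurableSet_Ioc).2 (.of_forall fun t ht =>
        mul_nonneg (wallisRatio_pos n).le (pow_nonneg ht.1.le _))) hsum]
  exact tsum_congr fun n => (hterm n).symm

lemma hasDerivAt_arcsl {x : ℝ} (hx : x ∈ Ioo 0 1) :
    HasDerivAt arcsl (1 / √(1 - x ^ 4)) x := by
  have hcont : ContinuousOn (fun t : ℝ => 1 / √(1 - t ^ 4)) (Ioo (-1) 1) := by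
    refine continuousOn_const.div (by fun_prop) fun t ht => (sqrt_pos.2 ?_).ne'
    have : |t| ^ 4 < 1 := pow_lt_one₀ (abs_nonneg t) (abs_lt.2 ht) (by norm_num)
    rw [pow_abs, abs_of_nonneg (by positivity)] at this
    linarith
  have hxI : x ∈ Ioo (-1) 1 := ⟨by linarith [hx.1], hx.2⟩
  have hint : IntervalIntegrable (fun t : ℝ => 1 / √(1 - t ^ 4)) volume 0 x := by
    refine (hcont.mono fun t ht => ?_).intervalIntegrable
    rw [uIcc_of_le hx.1.le] at ht
    exact ⟨by linarith [ht.1], ht.2.trans_lt hx.2⟩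
  refine (intervalIntegral.integral_hasDerivAt_right hint
    (hcont.stronglyMeasurableAtFilter isOpen_Ioo x hxI)
    (hcont.continuousAt (isOpen_Ioo.mem_nhds hxI))).congr_of_eventuallyEq ?_
  filter_upwards [isOpen_Ioo.mem_nhds hx] with t ht
  exact arcsl_eq_integral ht.1.le ht.2

lemma hasDerivAt_arcsl_sqrt_sin_sq {θ : ℝ} (hθ : θ ∈ Ioo 0 (π / 2)) :
    HasDerivAt (fun θ => arcsl √(sin θ) ^ 2) (∑' n, arcslCoeff n * sin θ ^ (2 * n)) θ := by
  have hsin : 0 < sin θ := sin_pos_of_pos_of_lt_pi hθ.1 (by linarith [hθ.2, pi_pos])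
  have hcos : 0 < cos θ := cos_pos_of_mem_Ioo ⟨by linarith [hθ.1, pi_pos], hθ.2⟩
  have hsin1 : sin θ < 1 := by
    rw [← sin_pi_div_two]
    exact sin_lt_sin_of_lt_of_le_pi_div_two (by linarith [hθ.1, pi_pos]) le_rfl hθ.2
  set x := √(sin θ) with hx
  have hx0 : 0 < x := sqrt_pos.2 hsin
  have hx1 : x < 1 := by rw [hx, sqrt_lt' one_pos]; simpa using hsin1
  have hsqrt4 : √(1 - x ^ 4) = cos θ := by
    rw [show x ^ 4 = (x ^ 2) ^ 2 by ring, hx, sq_sqrt hsin.le, ← cos_sq', sqrt_sq hcos.le]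
  have hd : HasDerivAt (fun θ => arcsl √(sin θ))
      (1 / √(1 - x ^ 4) * (1 / (2 * x) * cos θ)) θ :=
    ((hasDerivAt_arcsl ⟨hx0, hx1⟩).comp θ ((hasDerivAt_sqrt hsin.ne').comp θ (hasDerivAt_sin θ)) :)
  refine (hd.pow 2).congr_deriv ?_
  rw [hsqrt4, arcsl_sqrt hsin.le, ← hx]
  field_simp
  ring

lemma integral_tsum_arcslCoeff_mul_sin_pow :
    ∫ θ in (0 : ℝ)..π / 2, ∑' n, arcslCoeff n * sin θ ^ (2 * n) = arcsl 1 ^ 2 := by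
  have hcont : ContinuousOn (fun θ => arcsl √(sin θ) ^ 2) (Icc 0 (π / 2)) :=
    (continuousOn_arcsl.comp (by fun_prop) fun θ _ =>
      ⟨by linarith [sqrt_nonneg (sin θ)], sqrt_le_one.2 (sin_le_one θ)⟩).pow 2
  rw [intervalIntegral.integral_eq_sub_of_hasDeriv_right_of_le (by positivity) hcont
    (fun θ hθ => (hasDerivAt_arcsl_sqrt_sin_sq hθ).hasDerivWithinAt)
    (continuous_tsum_arcslCoeff_mul_sin_pow.intervalIntegrable _ _)]
  simp [arcsl]

lemma tsum_inv_mul_wallisRatio_sq :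
    ∑' n : ℕ, 1 / (4 * (n : ℝ) + 1) * wallisRatio n ^ 2 = 2 / π * arcsl 1 ^ 2 := by
  have hterm (n : ℕ) :
      ∫ θ in Ioc 0 (π / 2), arcslCoeff n * sin θ ^ (2 * n) =
        π / 2 * (1 / (4 * (n : ℝ) + 1) * wallisRatio n ^ 2) := by
    rw [← intervalIntegral.integral_of_le (by positivity), intervalIntegral.integral_const_mul,
      integral_sin_pow_even_half, arcslCoeff]
    ring
  have hsum : Summable fun n : ℕ => 1 / (4 * (n : ℝ) + 1) * wallisRatio n ^ 2 := by
    refine summable_arcslCoeff.of_nonneg_of_le (fun n => by positivity) fun n => ?_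
    rw [arcslCoeff, sq, ← mul_assoc, one_div_mul_eq_div]
    exact mul_le_of_le_one_right (arcslCoeff_pos n).le (wallisRatio_le_one n)
  have hnonneg (n : ℕ) : 0 ≤ᵐ[volume.restrict (Ioc 0 (π / 2))]
      fun θ => arcslCoeff n * sin θ ^ (2 * n) :=
    .of_forall fun θ => mul_nonneg (arcslCoeff_pos n).le ((even_two_mul n).pow_nonneg _)
  have h := integral_tsum_of_nonneg (fun n => (by fun_prop : Continuous _).integrableOn_Ioc)
    hnonneg (by simpa only [hterm] using hsum.mul_left (π / 2))
  rw [← intervalIntegral.integral_of_le (by positivity), integral_tsum_arcslCoeff_mul_sin_pow,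
    tsum_congr hterm, tsum_mul_left] at h
  rw [h]
  field_simp

theorem Real.Gamma_mul_Gamma_eq_Gamma_add_mul_integral {a b : ℝ} (ha : 0 < a) (hb : 0 < b) :
    Gamma a * Gamma b = Gamma (a + b) * ∫ x in Ioo 0 1, x ^ (a - 1) * (1 - x) ^ (b - 1) := by
  have h := Complex.Gamma_mul_Gamma_eq_betaIntegral (s := a) (t := b) (by simpa) (by simpa)
  have hbeta :
      Complex.betaIntegral a b = ↑(∫ x in (0 : ℝ)..1, x ^ (a - 1) * (1 - x) ^ (b - 1)) := by
    rw [Complex.betaIntegral, ← intervalIntegral.integral_ofReal]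
    refine intervalIntegral.integral_congr fun x hx => ?_
    rw [uIcc_of_le zero_le_one] at hx
    simp only [Complex.ofReal_mul, Complex.ofReal_cpow hx.1,
      Complex.ofReal_cpow (sub_nonneg.2 hx.2)]
    push_cast
    rfl
  rw [hbeta, intervalIntegral.integral_of_le zero_le_one, integral_Ioc_eq_integral_Ioo] at h
  apply Complex.ofReal_injective
  push_cast [← Complex.Gamma_ofReal]
  exact h

lemma tsum_arcslCoeff :
    ∑' n, arcslCoeff n =
      (∫ x in Ioo 0 1, x ^ ((1 / 4 : ℝ) - 1) * (1 - x) ^ ((1 / 2 : ℝ) - 1)) / 4 := by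
  have hexp (n : ℕ) : (-1 : ℝ) < n + (1 / 4 - 1) := by linarith [n.cast_nonneg (α := ℝ)]
  have hterm (n : ℕ) :
      ∫ x in Ioo 0 1, wallisRatio n * x ^ ((n : ℝ) + (1 / 4 - 1)) = 4 * arcslCoeff n := by
    rw [← integral_Ioc_eq_integral_Ioo, ← intervalIntegral.integral_of_le zero_le_one,
      intervalIntegral.integral_const_mul, integral_rpow (.inl (hexp n)), one_rpow,
      zero_rpow (by linarith [hexp n]), sub_zero, arcslCoeff,
      show (n : ℝ) + (1 / 4 - 1) + 1 = (4 * n + 1) / 4 by ring]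
    field_simp
  have hint (n : ℕ) :
      IntegrableOn (fun x : ℝ => wallisRatio n * x ^ ((n : ℝ) + (1 / 4 - 1))) (Ioo 0 1) :=
    (intervalIntegrable_iff_integrableOn_Ioo_of_le zero_le_one).1
      ((intervalIntegral.intervalIntegrable_rpow' (hexp n)).const_mul _)
  have hnonneg (n : ℕ) : 0 ≤ᵐ[volume.restrict (Ioo 0 1)]
      fun x : ℝ => wallisRatio n * x ^ ((n : ℝ) + (1 / 4 - 1)) :=
    (ae_restrict_iff' measurableSet_Ioo).2 <| .of_forall fun x hx =>
      mul_nonneg (wallisRatio_pos n).le (rpow_nonneg hx.1.le _)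
  have hseries : ∀ x ∈ Ioo (0 : ℝ) 1, x ^ ((1 / 4 : ℝ) - 1) * (1 - x) ^ ((1 / 2 : ℝ) - 1) =
      ∑' n, wallisRatio n * x ^ ((n : ℝ) + (1 / 4 - 1)) := by
    intro x hx
    have hb := (hasSum_wallisRatio_mul_pow (abs_lt.2 ⟨by linarith [hx.1], hx.2⟩)).mul_right
      (x ^ ((1 / 4 : ℝ) - 1))
    simp only [mul_assoc, ← rpow_natCast, ← rpow_add hx.1] at hb
    rw [hb.tsum_eq, sqrt_eq_rpow, show (1 / 2 : ℝ) - 1 = -(1 / 2) by norm_num,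
      rpow_neg (by linarith [hx.2])]
    ring
  rw [setIntegral_congr_fun measurableSet_Ioo hseries,
    integral_tsum_of_nonneg hint hnonneg
      (by simpa only [hterm] using summable_arcslCoeff.mul_left 4),
    tsum_congr hterm, tsum_mul_left]
  ring

lemma Gamma_one_quarter_mul_Gamma_three_quarters :
    Gamma (1 / 4) * Gamma (3 / 4) = π * √2 := by
  have h := Gamma_mul_Gamma_one_sub (1 / 4)
  rw [show π * (1 / 4) = π / 4 by ring, sin_pi_div_four] at h
  rw [show (3 / 4 : ℝ) = 1 - 1 / 4 by norm_num, h]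
  field_simp
  rw [sq_sqrt zero_le_two]

lemma arcsl_one_sq : arcsl 1 ^ 2 = Gamma (1 / 4) ^ 4 / (32 * π) := by
  have hbeta := Gamma_mul_Gamma_eq_Gamma_add_mul_integral (a := 1 / 4) (b := 1 / 2)
    (by norm_num) (by norm_num)
  rw [show (1 / 4 : ℝ) + 1 / 2 = 3 / 4 by norm_num, Gamma_one_half_eq] at hbeta
  have hGG := Gamma_one_quarter_mul_Gamma_three_quarters
  rw [arcsl_one, tsum_arcslCoeff]
  set I := ∫ x in Ioo (0 : ℝ) 1, x ^ ((1 / 4 : ℝ) - 1) * (1 - x) ^ ((1 / 2 : ℝ) - 1)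
  have hI : I * (π * √2) = Gamma (1 / 4) ^ 2 * √π := by
    rw [← hGG]
    linear_combination (-Gamma (1 / 4)) * hbeta
  have hI2 : I ^ 2 * (2 * π) = Gamma (1 / 4) ^ 4 := by
    have := congrArg (· ^ 2) hI
    simp only [mul_pow, sq_sqrt pi_pos.le, sq_sqrt zero_le_two] at this
    apply mul_right_cancel₀ pi_pos.ne'
    linear_combination this
  field_simp
  linear_combination 16 * hI2

theorem stmt_7 :
    ∑' n : ℕ, (1 / (4 * (n : ℝ) + 1)) * ((Nat.centralBinom n : ℝ) / 4 ^ n) ^ 2 =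
      Real.Gamma (1 / 4) ^ 4 / (16 * Real.pi ^ 2) := by
  calc _ = 2 / π * arcsl 1 ^ 2 := tsum_inv_mul_wallisRatio_sq
    _ = _ := by
      rw [arcsl_one_sq]
      field_simp
      ring
end

section
/- For every positive integer k, ∑_{n≥0} (C(2n,n)/4^n)² / ((n+1)_k · (1/2 - n)_k) = 2^{8k-3} Γ(k)² / (π Γ(4k)). -/
/-!
Write `t_k(n)` for the summand, `c_n = C(2n,n)/4^n` and `v_k(n) = -8n(4n-1) t_k(n) / (2k+1-2n)`.
A rational-function computation gives the Wilf–Zeilberger relation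
`(4k+1)(2k+1)(4k+3) t_{k+1}(n) = 32k t_k(n) + v_k(n+1) - v_k(n)`.
Since `c_n² ≤ 1/(2n+1)`, we have `n |t_k(n)| ≤ 2^k/n²` for `k ≥ 1`, so the series converge
and `v_k(N) → 0`; summing the relation gives `S_{k+1} = 32k S_k / ((4k+1)(2k+1)(4k+3))`,
which is also the ratio of consecutive values of the closed form. For `k = 0` the relation
telescopes `3 t_1(n)` to `v_0(N) = 8 (2N+1) c_N² · N(4N-1)/(4N²-1)`, which tends to `16/π`
by Wallis' product, so `S_1 = 16/(3π)`.
-/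

/-- Rising Pochhammer symbol `(a)_k = a (a+1) ⋯ (a+k-1)`. -/
noncomputable def poch (a : ℝ) (k : ℕ) : ℝ := ∏ i ∈ Finset.range k, (a + i)

open Filter Finset Topology Real

lemma poch_zero (a : ℝ) : poch a 0 = 1 := prod_range_zero _

lemma poch_succ (a : ℝ) (k : ℕ) : poch a (k + 1) = poch a k * (a + k) := prod_range_succ _ _

lemma poch_succ' (a : ℝ) (k : ℕ) : poch a (k + 1) = a * poch (a + 1) k := by
  rw [poch, prod_range_succ', mul_comm]
  simp only [Nat.cast_succ, Nat.cast_zero, add_zero, poch, add_assoc, add_comm (1 : ℝ)]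

lemma poch_one (a : ℝ) : poch a 1 = a := by simp [poch]

lemma poch_pos {a : ℝ} (ha : 0 < a) (k : ℕ) : 0 < poch a k :=
  prod_pos fun i _ => by positivity

lemma poch_ne_zero {a : ℝ} (ha : ∀ i : ℕ, a + i ≠ 0) (k : ℕ) : poch a k ≠ 0 :=
  prod_ne_zero_iff.2 fun i _ => ha i

lemma le_poch {a : ℝ} (ha : 1 ≤ a) {k : ℕ} (hk : 1 ≤ k) : a ≤ poch a k := by
  induction k, hk using Nat.le_induction with
  | base => rw [poch_one]
  | succ k _ ih =>
    rw [poch_succ]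
    nlinarith [(k.cast_nonneg : (0 : ℝ) ≤ k)]

lemma half_le_abs_intCast_add_half (m : ℤ) : 1 / 2 ≤ |(m : ℝ) + 1 / 2| := by
  rcases le_or_gt 0 m with h | h
  · have : (0 : ℝ) ≤ m := by exact_mod_cast h
    rw [abs_of_nonneg (by linarith)]
    linarith
  · have : (m : ℝ) ≤ -1 := by exact_mod_cast (by omega : m ≤ -1)
    rw [abs_of_neg (by linarith)]
    linarith

lemma intCast_add_half_ne_zero (m : ℤ) : (m : ℝ) + 1 / 2 ≠ 0 :=
  abs_pos.mp (by linarith [half_le_abs_intCast_add_half m])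

lemma two_mul_add_one_sub_two_mul_ne_zero (a b : ℕ) : (2 * a + 1 - 2 * b : ℝ) ≠ 0 := by
  have := intCast_add_half_ne_zero (a - b)
  push_cast at this
  contrapose! this
  linarith

lemma poch_half_sub_ne_zero (n k : ℕ) : poch (1 / 2 - n) k ≠ 0 :=
  poch_ne_zero (fun i => by
    have := two_mul_add_one_sub_two_mul_ne_zero i n
    contrapose! this
    linarith) k

lemma two_mul_sub_one_div_le_abs_poch_half_sub {n k : ℕ} (hn : 1 ≤ n) (hk : 1 ≤ k) :
    (2 * n - 1) / 2 ^ k ≤ |poch (1 / 2 - n) k| := by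
  induction k, hk using Nat.le_induction with
  | base =>
    have : (1 : ℝ) ≤ n := by exact_mod_cast hn
    rw [poch_one, abs_of_neg (by linarith)]
    linarith
  | succ k _ ih =>
    have hfac : 1 / 2 ≤ |1 / 2 - (n : ℝ) + k| := by
      have := half_le_abs_intCast_add_half (k - n)
      push_cast at this
      convert this using 2
      ring
    rw [poch_succ, abs_mul, pow_succ, ← div_div]
    calc (2 * n - 1 : ℝ) / 2 ^ k / 2 = (2 * n - 1) / 2 ^ k * (1 / 2) := by ring
      _ ≤ |poch (1 / 2 - n) k| * |1 / 2 - (n : ℝ) + k| := by gcongr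

noncomputable def scaledCentralBinom (n : ℕ) : ℝ := (Nat.centralBinom n : ℝ) / 4 ^ n

lemma scaledCentralBinom_succ (n : ℕ) :
    scaledCentralBinom (n + 1) = scaledCentralBinom n * (2 * n + 1) / (2 * n + 2) := by
  have h : ((n + 1 : ℕ) : ℝ) * Nat.centralBinom (n + 1) =
      2 * (2 * n + 1) * Nat.centralBinom n := by
    exact_mod_cast Nat.succ_mul_centralBinom_succ n
  unfold scaledCentralBinom
  push_cast at h
  rw [pow_succ]
  field_simp
  linear_combination 2 * h

lemma sq_scaledCentralBinom_le (n : ℕ) : scaledCentralBinom n ^ 2 ≤ 1 / (2 * n + 1) := by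
  rw [le_div_iff₀ (by positivity)]
  induction n with
  | zero => simp [scaledCentralBinom]
  | succ n ih =>
    rw [scaledCentralBinom_succ, div_pow, div_mul_eq_mul_div, div_le_one (by positivity)]
    push_cast
    nlinarith [sq_nonneg (scaledCentralBinom n)]

lemma mul_sq_scaledCentralBinom_mul_W (n : ℕ) :
    (2 * n + 1) * scaledCentralBinom n ^ 2 * Wallis.W n = 1 := by
  induction n with
  | zero => simp [scaledCentralBinom, Wallis.W]
  | succ n ih =>
    rw [scaledCentralBinom_succ, Wallis.W_succ]
    push_cast
    field_simp
    linear_combination (2 * (n : ℝ) + 3) * ih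

lemma tendsto_mul_sq_scaledCentralBinom_nhds_two_div_pi :
    Tendsto (fun n : ℕ => (2 * n + 1) * scaledCentralBinom n ^ 2) atTop (𝓝 (2 / π)) := by
  have h := Wallis.tendsto_W_nhds_pi_div_two.inv₀ (by positivity)
  rw [inv_div] at h
  exact h.congr fun n => (eq_inv_of_mul_eq_one_left (mul_sq_scaledCentralBinom_mul_W n)).symm

noncomputable def summand (k n : ℕ) : ℝ :=
  scaledCentralBinom n ^ 2 / (poch (n + 1) k * poch (1 / 2 - n) k)

noncomputable def wzCompanion (k n : ℕ) : ℝ :=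
  -8 * n * (4 * n - 1) * summand k n / (2 * k + 1 - 2 * n)

lemma summand_succ_left (k n : ℕ) :
    summand (k + 1) n = 2 * summand k n / ((k + n + 1) * (2 * k + 1 - 2 * n)) := by
  have := two_mul_add_one_sub_two_mul_ne_zero k n
  have := poch_half_sub_ne_zero n k
  have := (poch_pos (by positivity : (0 : ℝ) < n + 1) k).ne'
  unfold summand
  rw [poch_succ, poch_succ, show (1 / 2 - n + k : ℝ) = (2 * k + 1 - 2 * n) / 2 by ring]
  set d : ℝ := 2 * k + 1 - 2 * n
  field_simp
  ring

lemma summand_succ_right (k n : ℕ) :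
    summand k (n + 1) =
      -((2 * n + 1) * (2 * k - 1 - 2 * n)) / (4 * (n + 1) * (n + k + 1)) * summand k n := by
  have hd : (2 * k - 1 - 2 * n : ℝ) ≠ 0 := by
    convert two_mul_add_one_sub_two_mul_ne_zero k (n + 1) using 1; push_cast; ring
  have hQ := poch_half_sub_ne_zero n k
  have hP := (poch_pos (by positivity : (0 : ℝ) < n + 1) k).ne'
  have hP' : poch ((n + 1 : ℕ) + 1) k = poch (n + 1) k * (n + 1 + k) / (n + 1) := by
    rw [eq_div_iff (by positivity)]
    push_cast
    rw [mul_comm, ← poch_succ', poch_succ]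
  have hQ' : poch (1 / 2 - (n + 1 : ℕ)) k =
      -(2 * n + 1) * poch (1 / 2 - n) k / (2 * k - 1 - 2 * n) := by
    rw [eq_div_iff hd]
    have h := poch_succ' (1 / 2 - (n + 1 : ℕ)) k
    rw [poch_succ] at h
    push_cast at h ⊢
    rw [show (1 / 2 - (n + 1) + 1 : ℝ) = 1 / 2 - n by ring] at h
    linear_combination 2 * h
  unfold summand
  rw [scaledCentralBinom_succ, hP', hQ']
  set d : ℝ := 2 * k - 1 - 2 * n
  field_simp
  ring

lemma wzCompanion_zero_right (k : ℕ) : wzCompanion k 0 = 0 := by simp [wzCompanion]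

lemma wzCompanion_succ (k n : ℕ) :
    wzCompanion k (n + 1) = 2 * (2 * n + 1) * (4 * n + 3) * summand k n / (n + k + 1) := by
  have : (2 * k - 1 - 2 * n : ℝ) ≠ 0 := by
    convert two_mul_add_one_sub_two_mul_ne_zero k (n + 1) using 1; push_cast; ring
  unfold wzCompanion
  rw [summand_succ_right]
  push_cast
  rw [show (2 * k + 1 - 2 * (n + 1) : ℝ) = 2 * k - 1 - 2 * n by ring]
  have : (n + k + 1 : ℝ) ≠ 0 := by positivity
  set d : ℝ := 2 * k - 1 - 2 * n
  field_simp
  ring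

lemma summand_wz_recurrence (k n : ℕ) :
    (4 * k + 1) * (2 * k + 1) * (4 * k + 3) * summand (k + 1) n =
      32 * k * summand k n + (wzCompanion k (n + 1) - wzCompanion k n) := by
  have := two_mul_add_one_sub_two_mul_ne_zero k n
  rw [summand_succ_left, wzCompanion_succ, wzCompanion]
  have : (n + k + 1 : ℝ) ≠ 0 := by positivity
  have : (k + n + 1 : ℝ) ≠ 0 := by positivity
  set d : ℝ := 2 * k + 1 - 2 * n
  field_simp
  ring

lemma natCast_mul_abs_summand_le {k n : ℕ} (hk : 1 ≤ k) (hn : 1 ≤ n) :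
    n * |summand k n| ≤ 2 ^ k / n ^ 2 := by
  have hn' : (1 : ℝ) ≤ n := by exact_mod_cast hn
  have hP := le_poch (by linarith : (1 : ℝ) ≤ n + 1) hk
  have hP₀ := (poch_pos (by positivity : (0 : ℝ) < n + 1) k).le
  have hQ := two_mul_sub_one_div_le_abs_poch_half_sub hn hk
  calc n * |summand k n|
      = n * scaledCentralBinom n ^ 2 / (poch (n + 1) k * |poch (1 / 2 - n) k|) := by
        rw [summand, abs_div, abs_mul, abs_of_pos (poch_pos (by positivity) k),
          abs_of_nonneg (sq_nonneg _), mul_div_assoc]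
    _ ≤ n * (1 / (2 * n + 1)) / ((n + 1) * ((2 * n - 1) / 2 ^ k)) := by
        have : (0 : ℝ) < (2 * n - 1) / 2 ^ k := by
          apply div_pos <;> [linarith; positivity]
        gcongr
        exact sq_scaledCentralBinom_le n
    _ = 2 ^ k * (n / ((n + 1) * (2 * n - 1) * (2 * n + 1))) := by
        have : (2 * n - 1 : ℝ) ≠ 0 := by linarith
        field_simp
    _ ≤ 2 ^ k * (1 / n ^ 2) := by
        refine mul_le_mul_of_nonneg_left ?_ (by positivity)
        have : (0 : ℝ) < 2 * n - 1 := by linarith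
        rw [div_le_div_iff₀ (by positivity) (by positivity)]
        nlinarith
    _ = 2 ^ k / n ^ 2 := by ring

lemma summable_natCast_mul_abs_summand {k : ℕ} (hk : 1 ≤ k) :
    Summable fun n : ℕ => n * |summand k n| := by
  refine .of_norm_bounded_eventually_nat
    ((Real.summable_one_div_nat_pow.mpr one_lt_two).mul_left (2 ^ k)) ?_
  filter_upwards [eventually_ge_atTop 1] with n hn
  rw [Real.norm_eq_abs, abs_of_nonneg (by positivity), ← div_eq_mul_one_div]
  exact natCast_mul_abs_summand_le hk hn

lemma summable_summand {k : ℕ} (hk : 1 ≤ k) : Summable (summand k) := by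
  refine .of_norm_bounded_eventually_nat (summable_natCast_mul_abs_summand hk) ?_
  filter_upwards [eventually_ge_atTop 1] with n hn
  rw [Real.norm_eq_abs]
  exact le_mul_of_one_le_left (abs_nonneg _) (by exact_mod_cast hn)

lemma tendsto_wzCompanion_nhds_zero {k : ℕ} (hk : 1 ≤ k) :
    Tendsto (wzCompanion k) atTop (𝓝 0) := by
  have h := ((summable_natCast_mul_abs_summand hk).tendsto_atTop_zero).const_mul 32
  rw [mul_zero] at h
  refine squeeze_zero_norm' ?_ h
  filter_upwards [eventually_ge_atTop (2 * k + 1)] with n hn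
  have hn' : (2 * k + 1 : ℝ) ≤ n := by exact_mod_cast hn
  have hd : (n : ℝ) ≤ |(2 * k + 1 - 2 * n : ℝ)| := by
    rw [abs_of_neg (by linarith)]
    linarith
  rw [Real.norm_eq_abs, wzCompanion, abs_div, div_le_iff₀ (by linarith), abs_mul, abs_mul,
    abs_mul, abs_of_neg (by norm_num : (-8 : ℝ) < 0), abs_of_nonneg (n.cast_nonneg),
    abs_of_nonneg (by linarith : (0 : ℝ) ≤ 4 * n - 1)]
  nlinarith [abs_nonneg (summand k n), mul_le_mul_of_nonneg_left hd
    (by positivity : (0 : ℝ) ≤ 32 * n * |summand k n|)]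

lemma tendsto_wzCompanion_zero_nhds_sixteen_div_pi :
    Tendsto (wzCompanion 0) atTop (𝓝 (16 / π)) := by
  have hratio :
      Tendsto (fun n : ℕ => (4 - (n : ℝ)⁻¹) / (4 - ((n : ℝ)⁻¹) ^ 2)) atTop (𝓝 1) := by
    have h := tendsto_inv_atTop_zero.comp (tendsto_natCast_atTop_atTop (R := ℝ))
    convert ((tendsto_const_nhds (x := (4 : ℝ))).sub h).div
      ((tendsto_const_nhds (x := (4 : ℝ))).sub (h.pow 2)) (by norm_num) using 2 <;> norm_num
  have h := (tendsto_mul_sq_scaledCentralBinom_nhds_two_div_pi.const_mul 8).mul hratio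
  rw [show 8 * (2 / π) * 1 = 16 / π by ring] at h
  refine h.congr' ?_
  filter_upwards [eventually_ge_atTop 1] with n hn
  have hn' : (1 : ℝ) ≤ n := by exact_mod_cast hn
  have : (2 * n - 1 : ℝ) ≠ 0 := by linarith
  have hx : (n : ℝ)⁻¹ ≤ 1 := inv_le_one_of_one_le₀ hn'
  have hx₀ : 0 ≤ (n : ℝ)⁻¹ := by positivity
  have hratio_eq : (4 - (n : ℝ)⁻¹) / (4 - ((n : ℝ)⁻¹) ^ 2) =
      n * (4 * n - 1) / ((2 * n - 1) * (2 * n + 1)) := by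
    rw [div_eq_div_iff (by nlinarith) (by positivity)]
    field_simp
    ring
  simp only [wzCompanion, summand, poch_zero, hratio_eq]
  rw [show (2 * ((0 : ℕ) : ℝ) + 1 - 2 * n) = -(2 * n - 1) by push_cast; ring]
  field_simp

lemma mul_sum_range_summand_succ (k N : ℕ) :
    (4 * k + 1) * (2 * k + 1) * (4 * k + 3) * ∑ n ∈ range N, summand (k + 1) n =
      32 * k * ∑ n ∈ range N, summand k n + wzCompanion k N := by
  rw [mul_sum, mul_sum]
  simp_rw [summand_wz_recurrence]
  rw [sum_add_distrib, sum_range_sub, wzCompanion_zero_right, sub_zero]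

lemma hasSum_summand_one : HasSum (summand 1) (16 / (3 * π)) := by
  rw [(summable_summand le_rfl).hasSum_iff_tendsto_nat, show 16 / (3 * π) = 16 / π / 3 by ring]
  refine (tendsto_wzCompanion_zero_nhds_sixteen_div_pi.div_const 3).congr fun N => ?_
  have h := mul_sum_range_summand_succ 0 N
  norm_num at h
  rw [← h]
  ring

lemma hasSum_summand_succ {k : ℕ} (hk : 1 ≤ k) {S : ℝ} (hS : HasSum (summand k) S) :
    HasSum (summand (k + 1)) (32 * k * S / ((4 * k + 1) * (2 * k + 1) * (4 * k + 3))) := by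
  rw [(summable_summand (by omega)).hasSum_iff_tendsto_nat]
  have h := ((hS.tendsto_sum_nat.const_mul (32 * k : ℝ)).add
    (tendsto_wzCompanion_nhds_zero hk)).div_const ((4 * k + 1) * (2 * k + 1) * (4 * k + 3) : ℝ)
  rw [add_zero] at h
  refine h.congr fun N => ?_
  rw [← mul_sum_range_summand_succ, mul_div_cancel_left₀ _ (by positivity)]

lemma Gamma_four_mul_succ {k : ℕ} (hk : 1 ≤ k) :
    Gamma (4 * (k + 1 : ℕ)) =
      4 * k * (4 * k + 1) * (4 * k + 2) * (4 * k + 3) * Gamma (4 * k) := by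
  have hk' : (0 : ℝ) < k := by exact_mod_cast hk
  rw [show (4 * (k + 1 : ℕ) : ℝ) = 4 * k + 1 + 1 + 1 + 1 by push_cast; ring]
  rw [Gamma_add_one (by positivity), Gamma_add_one (by positivity), Gamma_add_one (by positivity),
    Gamma_add_one (by positivity)]
  ring

lemma hasSum_summand {k : ℕ} (hk : 1 ≤ k) :
    HasSum (summand k) (2 ^ (8 * k - 3) * Gamma k ^ 2 / (π * Gamma (4 * k))) := by
  induction k, hk using Nat.le_induction with
  | base =>
    convert hasSum_summand_one using 1
    rw [show (4 * ((1 : ℕ) : ℝ)) = (3 : ℕ) + 1 by norm_num, Gamma_nat_eq_factorial]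
    norm_num [Nat.factorial]
    ring
  | succ k hk ih =>
    convert hasSum_summand_succ hk ih using 1
    have hk' : (0 : ℝ) < k := by exact_mod_cast hk
    have := (Gamma_pos_of_pos (by positivity : (0 : ℝ) < 4 * k)).ne'
    rw [Gamma_four_mul_succ hk, show 8 * (k + 1) - 3 = 8 * k - 3 + 8 by omega, pow_add,
      Nat.cast_succ, Gamma_add_one hk'.ne']
    field_simp
    ring

theorem stmt_9 (k : ℕ) (hk : 0 < k) :
    ∑' n : ℕ, (((Nat.centralBinom n : ℝ) / 4 ^ n) ^ 2 /
        (poch ((n : ℝ) + 1) k * poch (1 / 2 - (n : ℝ)) k)) =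
      2 ^ (8 * k - 3) * Real.Gamma k ^ 2 / (Real.pi * Real.Gamma (4 * k)) :=
  (hasSum_summand hk).tsum_eq
end
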